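/- arXiv:1305.6276 — 5 statements merged into one kernel-verified Lean document; each statement's English description precedes it below -/
import Mathlib

section
/- On O₂ = {(x,v,a) : v ≠ 0} with the presymplectic form ω = v⁻³ dv ∧ da, the vector fields Y₁ = 2v ∂/∂a, Y₂ = v ∂/∂v + 2a ∂/∂a, Y₃ = v ∂/∂x + a ∂/∂v + ((3/2)a²/v − 2c₀v³) ∂/∂a satisfy ι_{Y₁}ω = d(2/v), ι_{Y₂}ω = d(a/v²), ι_{Y₃}ω = d(a²/(2v³) + 2c₀v). -/
/-! In the coordinates `(x, v, a)`, `ι_Y (v⁻³ dv ∧ da) = v⁻³ (Y_v da - Y_a dv)`, so `ι_Y ω = dH`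
exactly when `(Y_v, Y_a) = v³ (∂H/∂a, -∂H/∂v)` and `H` does not depend on `x`; the `∂/∂x`
component of `Y` is left free. Each identity thus reduces to computing two partial derivatives. -/

open ContinuousLinearMap

section VelocityAcceleration

variable {p : ℝ × ℝ × ℝ} (u : ℝ × ℝ × ℝ)

theorem hasFDerivAt_velocity :
    HasFDerivAt (fun q : ℝ × ℝ × ℝ => q.2.1) (fst ℝ ℝ ℝ ∘L snd ℝ ℝ (ℝ × ℝ)) p :=
  hasFDerivAt_snd.fst

theorem hasFDerivAt_acceleration :
    HasFDerivAt (fun q : ℝ × ℝ × ℝ => q.2.2) (snd ℝ ℝ ℝ ∘L snd ℝ ℝ (ℝ × ℝ)) p :=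
  hasFDerivAt_snd.snd

theorem hasFDerivAt_velocity_inv (hp : p.2.1 ≠ 0) :
    HasFDerivAt (fun q : ℝ × ℝ × ℝ => (q.2.1)⁻¹)
      (-(p.2.1 ^ 2)⁻¹ • (fst ℝ ℝ ℝ ∘L snd ℝ ℝ (ℝ × ℝ))) p :=
  (hasDerivAt_inv hp).comp_hasFDerivAt p hasFDerivAt_velocity

theorem fderiv_two_div_velocity (hp : p.2.1 ≠ 0) :
    fderiv ℝ (fun q : ℝ × ℝ × ℝ => 2 / q.2.1) p u = -2 / p.2.1 ^ 2 * u.2.1 := by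
  have h := (hasFDerivAt_velocity_inv hp).const_mul 2
  rw [(h.congr_of_eventuallyEq (.of_forall fun q => div_eq_mul_inv _ _)).fderiv]
  simp only [smul_apply, comp_apply, coe_snd', coe_fst', smul_eq_mul]
  field_simp

theorem fderiv_acceleration_div_velocity_sq (hp : p.2.1 ≠ 0) :
    fderiv ℝ (fun q : ℝ × ℝ × ℝ => q.2.2 / q.2.1 ^ 2) p u =
      -2 * p.2.2 / p.2.1 ^ 3 * u.2.1 + u.2.2 / p.2.1 ^ 2 := by
  have h := hasFDerivAt_acceleration.fun_mul ((hasFDerivAt_velocity_inv hp).pow 2)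
  rw [(h.congr_of_eventuallyEq (.of_forall fun q => by ring)).fderiv]
  simp only [add_apply, smul_apply, comp_apply, coe_snd', coe_fst', smul_eq_mul, nsmul_eq_mul,
    Nat.cast_ofNat, Nat.add_one_sub_one]
  field_simp

theorem fderiv_kummerSchwarz_hamiltonian (c₀ : ℝ) (hp : p.2.1 ≠ 0) :
    fderiv ℝ (fun q : ℝ × ℝ × ℝ => q.2.2 ^ 2 / (2 * q.2.1 ^ 3) + 2 * c₀ * q.2.1) p u =
      (2 * c₀ - 3 * p.2.2 ^ 2 / (2 * p.2.1 ^ 4)) * u.2.1 + p.2.2 / p.2.1 ^ 3 * u.2.2 := by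
  have h := ((hasFDerivAt_acceleration.pow 2).fun_mul
    (((hasFDerivAt_velocity_inv hp).pow 3).const_mul 2⁻¹)).fun_add
    (hasFDerivAt_velocity.const_mul (2 * c₀))
  rw [(h.congr_of_eventuallyEq (.of_forall fun q => by ring)).fderiv]
  simp only [add_apply, smul_apply, comp_apply, coe_snd', coe_fst', smul_eq_mul, nsmul_eq_mul,
    Nat.cast_ofNat, Nat.add_one_sub_one]
  field_simp
  ring

end VelocityAcceleration

/-- on `O₂ = {(x,v,a) : v ≠ 0}` with `ω = v⁻³ dv ∧ da`
(so `ω p u w = (u_v w_a − u_a w_v)/v³`), the vector fields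
`Y₁ = 2v ∂ₐ`, `Y₂ = v ∂ᵥ + 2a ∂ₐ`, `Y₃ = v ∂ₓ + a ∂ᵥ + ((3/2)a²/v − 2c₀v³) ∂ₐ`
satisfy `ι_{Y₁}ω = d(2/v)`, `ι_{Y₂}ω = d(a/v²)`, `ι_{Y₃}ω = d(a²/(2v³) + 2c₀v)`. -/
theorem kummerSchwarz_hamiltonian_vector_fields (c₀ : ℝ)
    (ω : ℝ × ℝ × ℝ → (ℝ × ℝ × ℝ) → (ℝ × ℝ × ℝ) → ℝ)
    (hω : ∀ p u w, ω p u w = (u.2.1 * w.2.2 - u.2.2 * w.2.1) / p.2.1 ^ 3)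
    (Y₁ Y₂ Y₃ : ℝ × ℝ × ℝ → ℝ × ℝ × ℝ)
    (hY₁ : ∀ p, Y₁ p = (0, 0, 2 * p.2.1))
    (hY₂ : ∀ p, Y₂ p = (0, p.2.1, 2 * p.2.2))
    (hY₃ : ∀ p, Y₃ p = (p.2.1, p.2.2, (3/2) * p.2.2 ^ 2 / p.2.1 - 2 * c₀ * p.2.1 ^ 3)) :
    ∀ p : ℝ × ℝ × ℝ, p.2.1 ≠ 0 → ∀ u : ℝ × ℝ × ℝ,
      ω p (Y₁ p) u = fderiv ℝ (fun q : ℝ × ℝ × ℝ => 2 / q.2.1) p u ∧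
      ω p (Y₂ p) u = fderiv ℝ (fun q : ℝ × ℝ × ℝ => q.2.2 / q.2.1 ^ 2) p u ∧
      ω p (Y₃ p) u = fderiv ℝ
        (fun q : ℝ × ℝ × ℝ => q.2.2 ^ 2 / (2 * q.2.1 ^ 3) + 2 * c₀ * q.2.1) p u := by
  intro p hp u
  rw [hω, hω, hω, hY₁, hY₂, hY₃, fderiv_two_div_velocity u hp,
    fderiv_acceleration_div_velocity_sq u hp, fderiv_kummerSchwarz_hamiltonian u c₀ hp]
  refine ⟨?_, ?_, ?_⟩ <;>
  · field_simp
    ring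
end

section
/- The functions h₁ = −2/v, h₂ = −a/v², h₃ = −a²/(2v³) − 2c₀v on O₂ = {(x,v,a) : v ≠ 0}, with Poisson-type bracket defined by {f,g} = ω(X_f, X_g) where ω = v⁻³ dv ∧ da and X_{h₁} = Y₁, X_{h₂} = Y₂, X_{h₃} = Y₃ as above, satisfy {h₁,h₂} = h₁, {h₁,h₃} = 2h₂, {h₂,h₃} = h₃. -/
/-- with `{f,g} := X_f g`, the Hamiltonian functions
`h₁ = −2/v`, `h₂ = −a/v²`, `h₃ = −a²/(2v³) − 2c₀v` of
`Y₁ = 2v ∂ₐ`, `Y₂ = v ∂ᵥ + 2a ∂ₐ`, `Y₃` satisfy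
`{h₁,h₂} = h₁`, `{h₁,h₃} = 2h₂`, `{h₂,h₃} = h₃`, i.e.
`Y₁(h₂) = h₁`, `Y₁(h₃) = 2h₂`, `Y₂(h₃) = h₃` on `v ≠ 0`. -/
theorem kummerSchwarz_hamiltonian_sl2 (c₀ : ℝ)
    (h₁ h₂ h₃ : ℝ × ℝ × ℝ → ℝ)
    (hh₁ : ∀ p, h₁ p = -2 / p.2.1)
    (hh₂ : ∀ p, h₂ p = -p.2.2 / p.2.1 ^ 2)
    (hh₃ : ∀ p, h₃ p = -p.2.2 ^ 2 / (2 * p.2.1 ^ 3) - 2 * c₀ * p.2.1)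
    (Y₁ Y₂ : ℝ × ℝ × ℝ → ℝ × ℝ × ℝ)
    (hY₁ : ∀ p, Y₁ p = (0, 0, 2 * p.2.1))
    (hY₂ : ∀ p, Y₂ p = (0, p.2.1, 2 * p.2.2)) :
    ∀ p : ℝ × ℝ × ℝ, p.2.1 ≠ 0 →
      fderiv ℝ h₂ p (Y₁ p) = h₁ p ∧
      fderiv ℝ h₃ p (Y₁ p) = 2 * h₂ p ∧
      fderiv ℝ h₃ p (Y₂ p) = h₃ p := by
  intro p hv
  set Lv : (ℝ × ℝ × ℝ) →L[ℝ] ℝ :=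
    (ContinuousLinearMap.fst ℝ ℝ ℝ).comp (ContinuousLinearMap.snd ℝ ℝ (ℝ × ℝ)) with hLv
  set La : (ℝ × ℝ × ℝ) →L[ℝ] ℝ :=
    (ContinuousLinearMap.snd ℝ ℝ ℝ).comp (ContinuousLinearMap.snd ℝ ℝ (ℝ × ℝ)) with hLa
  have hvd : HasFDerivAt (fun q : ℝ × ℝ × ℝ => q.2.1) Lv p :=
    (hasFDerivAt_fst).comp p hasFDerivAt_snd
  have had : HasFDerivAt (fun q : ℝ × ℝ × ℝ => q.2.2) La p :=
    (hasFDerivAt_snd).comp p hasFDerivAt_snd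
  have hvv : HasFDerivAt (fun q : ℝ × ℝ × ℝ => q.2.1 * q.2.1)
      (p.2.1 • Lv + p.2.1 • Lv) p := hvd.mul hvd
  have hinv2 : HasFDerivAt (fun q : ℝ × ℝ × ℝ => (q.2.1 * q.2.1)⁻¹)
      ((-((p.2.1 * p.2.1) ^ 2)⁻¹) • (p.2.1 • Lv + p.2.1 • Lv)) p :=
    (hasDerivAt_inv (mul_ne_zero hv hv)).comp_hasFDerivAt p hvv
  have hd2 : HasFDerivAt (fun q : ℝ × ℝ × ℝ => -q.2.2 * (q.2.1 * q.2.1)⁻¹)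
      ((-p.2.2) • ((-((p.2.1 * p.2.1) ^ 2)⁻¹) • (p.2.1 • Lv + p.2.1 • Lv))
        + ((p.2.1 * p.2.1)⁻¹) • (-La)) p := had.neg.mul hinv2
  have hvvv : HasFDerivAt (fun q : ℝ × ℝ × ℝ => q.2.1 * q.2.1 * q.2.1)
      ((p.2.1 * p.2.1) • Lv + p.2.1 • (p.2.1 • Lv + p.2.1 • Lv)) p := hvv.mul hvd
  have h2vvv : HasFDerivAt (fun q : ℝ × ℝ × ℝ => 2 * (q.2.1 * q.2.1 * q.2.1))
      ((2 : ℝ) • ((p.2.1 * p.2.1) • Lv + p.2.1 • (p.2.1 • Lv + p.2.1 • Lv))) p :=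
    hvvv.const_mul 2
  have hne3 : (2 : ℝ) * (p.2.1 * p.2.1 * p.2.1) ≠ 0 :=
    mul_ne_zero two_ne_zero (mul_ne_zero (mul_ne_zero hv hv) hv)
  have hinv3 : HasFDerivAt (fun q : ℝ × ℝ × ℝ => (2 * (q.2.1 * q.2.1 * q.2.1))⁻¹)
      ((-((2 * (p.2.1 * p.2.1 * p.2.1)) ^ 2)⁻¹) •
        ((2 : ℝ) • ((p.2.1 * p.2.1) • Lv + p.2.1 • (p.2.1 • Lv + p.2.1 • Lv)))) p :=
    (hasDerivAt_inv hne3).comp_hasFDerivAt p h2vvv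
  have haa : HasFDerivAt (fun q : ℝ × ℝ × ℝ => q.2.2 * q.2.2)
      (p.2.2 • La + p.2.2 • La) p := had.mul had
  have hd3 : HasFDerivAt (fun q : ℝ × ℝ × ℝ =>
      -(q.2.2 * q.2.2) * (2 * (q.2.1 * q.2.1 * q.2.1))⁻¹ - 2 * c₀ * q.2.1)
      (((-(p.2.2 * p.2.2)) • ((-((2 * (p.2.1 * p.2.1 * p.2.1)) ^ 2)⁻¹) •
          ((2 : ℝ) • ((p.2.1 * p.2.1) • Lv + p.2.1 • (p.2.1 • Lv + p.2.1 • Lv))))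
        + ((2 * (p.2.1 * p.2.1 * p.2.1))⁻¹) • (-(p.2.2 • La + p.2.2 • La)))
        - (2 * c₀) • Lv) p :=
    ((haa.neg.mul hinv3)).sub (hvd.const_mul (2 * c₀))
  have e2 : h₂ = fun q : ℝ × ℝ × ℝ => -q.2.2 * (q.2.1 * q.2.1)⁻¹ :=
    funext fun q => by rw [hh₂]; ring
  have e3 : h₃ = fun q : ℝ × ℝ × ℝ =>
      -(q.2.2 * q.2.2) * (2 * (q.2.1 * q.2.1 * q.2.1))⁻¹ - 2 * c₀ * q.2.1 :=
    funext fun q => by rw [hh₃]; ring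
  rw [e2, e3, hd2.fderiv, hd3.fderiv, hY₁, hY₂, hh₁]
  simp only [hLv, hLa, ContinuousLinearMap.add_apply, ContinuousLinearMap.sub_apply,
    ContinuousLinearMap.smul_apply, ContinuousLinearMap.neg_apply,
    ContinuousLinearMap.comp_apply, ContinuousLinearMap.coe_fst',
    ContinuousLinearMap.coe_snd', smul_eq_mul]
  refine ⟨?_, ?_, ?_⟩ <;> field_simp <;> ring
end

section
/- The function I(x₁,v₁,a₁,x₂,v₂,a₂) = (a₂v₁ − a₁v₂)²/(v₁³v₂³) is a common first integral of the diagonal prolongations Ỹ₁ = v₁∂/∂a₁ + v₂∂/∂a₂, Ỹ₂ = Σᵢ(vᵢ∂/∂vᵢ + 2aᵢ∂/∂aᵢ), Ỹ₃ = Σᵢ(vᵢ∂/∂xᵢ + aᵢ∂/∂vᵢ + (3/2)(aᵢ²/vᵢ)∂/∂aᵢ) on the open set where v₁v₂ ≠ 0; i.e., Ỹ₁I = Ỹ₂I = Ỹ₃I = 0. -/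
/-!
Write `I = w² / D` with `w = a₂v₁ − a₁v₂` and `D = v₁³v₂³`. Along any vector field `Y`,
`Y I = w (2 D · Y w − w · Y D) / D²`, so it suffices that `2 D · Y w = w · Y D`.
The field `Ỹ₁` kills both `w` and `D`; `Ỹ₂` scales them with weights `3` and `6`; and
`Ỹ₃ w = (3/2)(a₁/v₁ + a₂/v₂) w` while `Ỹ₃ D = 3 (a₁/v₁ + a₂/v₂) D`.
-/

open ContinuousLinearMap

theorem HasFDerivAt.fderiv_sq_div_apply_eq_zero {𝕜 E : Type*} [NontriviallyNormedField 𝕜]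
    [NormedAddCommGroup E] [NormedSpace 𝕜 E] {g h : E → 𝕜} {g' h' : E →L[𝕜] 𝕜} {p v : E}
    (hg : HasFDerivAt g g' p) (hh : HasFDerivAt h h' p) (hp : h p ≠ 0)
    (hv : 2 * h p * g' v = g p * h' v) :
    fderiv 𝕜 (fun x => g x ^ 2 / h x) p v = 0 := by
  have hf := (hg.pow 2).fun_mul ((hasDerivAt_inv hp).comp_hasFDerivAt p hh)
  simp only [Function.comp_def, ← div_eq_mul_inv] at hf
  rw [hf.fderiv]
  simp only [add_apply, smul_apply, smul_eq_mul]
  field_simp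
  linear_combination g p * hv

/-- Coordinates on `ℝ⁶`: `(p 0, p 1, p 2, p 3, p 4, p 5) = (x₁, v₁, a₁, x₂, v₂, a₂)`. -/
theorem schwarzian_diagonal_first_integral
    (I : (Fin 6 → ℝ) → ℝ)
    (hI : ∀ p, I p = (p 5 * p 1 - p 2 * p 4) ^ 2 / ((p 1) ^ 3 * (p 4) ^ 3)) :
    ∀ p : Fin 6 → ℝ, p 1 * p 4 ≠ 0 →
      fderiv ℝ I p ![0, 0, p 1, 0, 0, p 4] = 0 ∧
      fderiv ℝ I p ![0, p 1, 2 * p 2, 0, p 4, 2 * p 5] = 0 ∧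
      fderiv ℝ I p
        ![p 1, p 2, (3/2) * (p 2) ^ 2 / p 1, p 4, p 5, (3/2) * (p 5) ^ 2 / p 4] = 0 := by
  obtain rfl : I = _ := funext hI
  intro p hp
  have hv₁ : p 1 ≠ 0 := left_ne_zero_of_mul hp
  have hv₂ : p 4 ≠ 0 := right_ne_zero_of_mul hp
  have hw := ((hasFDerivAt_apply (𝕜 := ℝ) 5 p).fun_mul (hasFDerivAt_apply 1 p)).fun_sub
    ((hasFDerivAt_apply (𝕜 := ℝ) 2 p).fun_mul (hasFDerivAt_apply 4 p))
  have hD := ((hasFDerivAt_apply (𝕜 := ℝ) 1 p).pow 3).fun_mul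
    ((hasFDerivAt_apply (𝕜 := ℝ) 4 p).pow 3)
  have hYI := fun v => hw.fderiv_sq_div_apply_eq_zero (v := v) hD (by positivity)
  refine ⟨hYI _ ?_, hYI _ ?_, hYI _ ?_⟩ <;>
  · simp only [sub_apply, add_apply, smul_apply, proj_apply, smul_eq_mul, nsmul_eq_mul,
      Matrix.cons_val, Nat.cast_ofNat]
    field_simp
    ring
end

section
/- The function F₂(x₁,v₁,a₁,x₂,v₂,a₂) = x₁ + x₂ + 2v₁v₂(v₁−v₂)/(a₂v₁ − a₁v₂) is a common first integral of the vector fields Ỹ₁ = 2v₁∂/∂a₁ + 2v₂∂/∂a₂, Ỹ₂ = Σᵢ(vᵢ∂/∂vᵢ + 2aᵢ∂/∂aᵢ), and Ỹ₃ = Σᵢ(vᵢ∂/∂xᵢ + aᵢ∂/∂vᵢ + (3/2)(aᵢ²/vᵢ)∂/∂aᵢ) on the open set where v₁v₂(a₂v₁ − a₁v₂) ≠ 0. -/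
open ContinuousLinearMap

/-! Write `F₂ = x₁ + x₂ + N / D` with `N = 2 v₁ v₂ (v₁ - v₂)` and `D = a₂ v₁ - a₁ v₂`. Along `Ỹ₁`
both `N` and `D` are constant. `Ỹ₂` is the Euler field of the grading with weight 1 on `v` and 2
on `a`, for which `N` and `D` are both homogeneous of degree 3. Along `Ỹ₃` the quotient rule gives
`(N / D)' = -(v₁ + v₂)`, cancelling the derivative of `x₁ + x₂`. -/

theorem fderiv_div_apply {𝕜 E : Type*} [NontriviallyNormedField 𝕜] [NormedAddCommGroup E]
    [NormedSpace 𝕜 E] {f g : E → 𝕜} {x : E} (hf : DifferentiableAt 𝕜 f x)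
    (hg : DifferentiableAt 𝕜 g x) (hx : g x ≠ 0) (v : E) :
    fderiv 𝕜 (fun y => f y / g y) x v =
      (fderiv 𝕜 f x v * g x - f x * fderiv 𝕜 g x v) / g x ^ 2 := by
  have hinv : HasFDerivAt (fun y => (g y)⁻¹) (-(g x ^ 2)⁻¹ • fderiv 𝕜 g x) x :=
    (hasDerivAt_inv hx).comp_hasFDerivAt x hg.hasFDerivAt
  simp_rw [div_eq_mul_inv]
  rw [fderiv_fun_mul hf hinv.differentiableAt, hinv.fderiv]
  simp only [add_apply, smul_apply, smul_eq_mul]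
  field_simp
  ring

namespace SchwarzianDiagonal

/-! Coordinates `(p 0, …, p 5) = (x₁, v₁, a₁, x₂, v₂, a₂)`. -/

def num (p : Fin 6 → ℝ) : ℝ := 2 * p 1 * p 4 * (p 1 - p 4)

def den (p : Fin 6 → ℝ) : ℝ := p 5 * p 1 - p 2 * p 4

noncomputable def firstIntegral (p : Fin 6 → ℝ) : ℝ := p 0 + p 3 + num p / den p

def Y₁ (p : Fin 6 → ℝ) : Fin 6 → ℝ := ![0, 0, 2 * p 1, 0, 0, 2 * p 4]

def Y₂ (p : Fin 6 → ℝ) : Fin 6 → ℝ := ![0, p 1, 2 * p 2, 0, p 4, 2 * p 5]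

noncomputable def Y₃ (p : Fin 6 → ℝ) : Fin 6 → ℝ :=
  ![p 1, p 2, (3/2) * (p 2) ^ 2 / p 1, p 4, p 5, (3/2) * (p 5) ^ 2 / p 4]

theorem fderiv_num_apply (p v : Fin 6 → ℝ) :
    fderiv ℝ num p v =
      2 * (v 1 * p 4 + p 1 * v 4) * (p 1 - p 4) + 2 * p 1 * p 4 * (v 1 - v 4) := by
  unfold num
  simp (disch := fun_prop) only [fderiv_fun_mul, fderiv_fun_sub, fderiv_fun_const,
    (hasFDerivAt_apply _ _).fderiv, add_apply, sub_apply, smul_apply, proj_apply, Pi.zero_apply,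
    zero_apply, smul_eq_mul]
  ring

theorem fderiv_den_apply (p v : Fin 6 → ℝ) :
    fderiv ℝ den p v = v 5 * p 1 + p 5 * v 1 - (v 2 * p 4 + p 2 * v 4) := by
  unfold den
  simp (disch := fun_prop) only [fderiv_fun_mul, fderiv_fun_sub, (hasFDerivAt_apply _ _).fderiv,
    add_apply, sub_apply, smul_apply, proj_apply, smul_eq_mul]
  ring

variable {p : Fin 6 → ℝ}

theorem fderiv_firstIntegral_apply (hp : den p ≠ 0) (v : Fin 6 → ℝ) :
    fderiv ℝ firstIntegral p v =
      v 0 + v 3 + (fderiv ℝ num p v * den p - num p * fderiv ℝ den p v) / den p ^ 2 := by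
  have hnum : DifferentiableAt ℝ num p := by unfold num; fun_prop
  have hden : DifferentiableAt ℝ den p := by unfold den; fun_prop
  unfold firstIntegral
  rw [fderiv_fun_add (by fun_prop) (by fun_prop (disch := exact hp)),
    fderiv_fun_add (by fun_prop) (by fun_prop), add_apply, fderiv_div_apply hnum hden hp]
  simp [(hasFDerivAt_apply _ _).fderiv]

theorem fderiv_firstIntegral_Y₁ (hp : den p ≠ 0) : fderiv ℝ firstIntegral p (Y₁ p) = 0 := by
  have hnum : fderiv ℝ num p (Y₁ p) = 0 := by simp [fderiv_num_apply, Y₁]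
  have hden : fderiv ℝ den p (Y₁ p) = 0 := by
    simp only [fderiv_den_apply, Y₁, Matrix.cons_val, Matrix.cons_val_zero, Matrix.cons_val_one]
    ring
  rw [fderiv_firstIntegral_apply hp, hnum, hden]
  simp [Y₁]

theorem fderiv_firstIntegral_Y₂ (hp : den p ≠ 0) : fderiv ℝ firstIntegral p (Y₂ p) = 0 := by
  have hnum : fderiv ℝ num p (Y₂ p) = 3 * num p := by
    simp only [fderiv_num_apply, num, Y₂, Matrix.cons_val, Matrix.cons_val_zero,
      Matrix.cons_val_one]
    ring
  have hden : fderiv ℝ den p (Y₂ p) = 3 * den p := by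
    simp only [fderiv_den_apply, den, Y₂, Matrix.cons_val, Matrix.cons_val_zero,
      Matrix.cons_val_one]
    ring
  have hquot : fderiv ℝ num p (Y₂ p) * den p - num p * fderiv ℝ den p (Y₂ p) = 0 := by
    rw [hnum, hden]; ring
  rw [fderiv_firstIntegral_apply hp, hquot]
  simp [Y₂]

theorem fderiv_firstIntegral_Y₃ (h₁ : p 1 ≠ 0) (h₄ : p 4 ≠ 0) (hp : den p ≠ 0) :
    fderiv ℝ firstIntegral p (Y₃ p) = 0 := by
  rw [fderiv_firstIntegral_apply hp, fderiv_num_apply, fderiv_den_apply]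
  simp only [Y₃, num, Matrix.cons_val, Matrix.cons_val_zero, Matrix.cons_val_one]
  field_simp
  unfold den
  ring

end SchwarzianDiagonal

open SchwarzianDiagonal in
/-- `F₂ = x₁ + x₂ + 2v₁v₂(v₁−v₂)/(a₂v₁ − a₁v₂)` is a common first integral
of `Ỹ₁ = 2v₁∂_{a₁} + 2v₂∂_{a₂}`, `Ỹ₂`, `Ỹ₃` on `{v₁v₂(a₂v₁ − a₁v₂) ≠ 0}`.
Coordinates on `ℝ⁶`: `(p 0, …, p 5) = (x₁, v₁, a₁, x₂, v₂, a₂)`. -/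
theorem schwarzian_diagonal_first_integral_F2
    (F₂ : (Fin 6 → ℝ) → ℝ)
    (hF₂ : ∀ p, F₂ p = p 0 + p 3 +
      2 * p 1 * p 4 * (p 1 - p 4) / (p 5 * p 1 - p 2 * p 4)) :
    ∀ p : Fin 6 → ℝ, p 1 * p 4 * (p 5 * p 1 - p 2 * p 4) ≠ 0 →
      fderiv ℝ F₂ p ![0, 0, 2 * p 1, 0, 0, 2 * p 4] = 0 ∧
      fderiv ℝ F₂ p ![0, p 1, 2 * p 2, 0, p 4, 2 * p 5] = 0 ∧
      fderiv ℝ F₂ p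
        ![p 1, p 2, (3/2) * (p 2) ^ 2 / p 1, p 4, p 5, (3/2) * (p 5) ^ 2 / p 4] = 0 := by
  intro p hp
  obtain ⟨⟨h₁, h₄⟩, hden⟩ : (p 1 ≠ 0 ∧ p 4 ≠ 0) ∧ den p ≠ 0 := by
    simpa only [mul_ne_zero_iff, den] using hp
  obtain rfl : F₂ = firstIntegral := funext hF₂
  exact ⟨fderiv_firstIntegral_Y₁ hden, fderiv_firstIntegral_Y₂ hden,
    fderiv_firstIntegral_Y₃ h₁ h₄ hden⟩
end

section
/- Let ω = v⁻³ dv ∧ da on O₂ = {(x,v,a) : v ≠ 0} and Z_P = x² ∂/∂x + 2vx ∂/∂v + 2(ax + v²) ∂/∂a. Then the Lie derivative ω_{Z_P} := L_{Z_P} ω equals −(2/v³)(x dv∧da + v da∧dx + a dx∧dv), and ω_{Z_P} is closed. -/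
/-!
The 2-form `η` is the interior product `ι_Y vol` of the volume form with
`Y = -2 v⁻³ (x, v, a)`, and `d (ι_Y vol) = (div Y) vol`. Since `v⁻³` is homogeneous of
degree `-3` in dimension three, Euler's relation gives
`div (v⁻³ (x, v, a)) = 3 v⁻³ - 3 v⁻³ = 0`, so `η` is closed. The formula for `L_Z ω` is a
direct computation from the Jacobian of `Z`.
-/

def volumeForm (u w s : ℝ × ℝ × ℝ) : ℝ :=
  u.1 * (w.2.1 * s.2.2 - w.2.2 * s.2.1) + u.2.1 * (w.2.2 * s.1 - w.1 * s.2.2)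
    + u.2.2 * (w.1 * s.2.1 - w.2.1 * s.1)

def trace3 (A : (ℝ × ℝ × ℝ) →L[ℝ] ℝ × ℝ × ℝ) : ℝ :=
  (A (1, 0, 0)).1 + (A (0, 1, 0)).2.1 + (A (0, 0, 1)).2.2

lemma cyclic_sum_volumeForm_map (A : (ℝ × ℝ × ℝ) →L[ℝ] ℝ × ℝ × ℝ) (u w s : ℝ × ℝ × ℝ) :
    volumeForm (A u) w s + volumeForm (A w) s u + volumeForm (A s) u w
      = trace3 A * volumeForm u w s := by
  have hA : ∀ u : ℝ × ℝ × ℝ,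
      A u = u.1 • A (1, 0, 0) + u.2.1 • A (0, 1, 0) + u.2.2 • A (0, 0, 1) := by
    intro u
    simp only [← map_smul, ← map_add]
    congr 1
    ext <;> simp
  rw [hA u, hA w, hA s]
  simp only [volumeForm, trace3, Prod.fst_add, Prod.snd_add, Prod.smul_fst, Prod.smul_snd,
    smul_eq_mul]
  ring

lemma fderiv_volumeForm_apply {Y : ℝ × ℝ × ℝ → ℝ × ℝ × ℝ} {p : ℝ × ℝ × ℝ}
    (hY : DifferentiableAt ℝ Y p) (u w s : ℝ × ℝ × ℝ) :
    fderiv ℝ (fun q => volumeForm (Y q) w s) p u = volumeForm (fderiv ℝ Y p u) w s := by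
  simp (disch := fun_prop) [volumeForm, fderiv_fun_add, fderiv_mul_const, fderiv.fst,
    fderiv.snd]
  ring

lemma cyclic_sum_fderiv_volumeForm {Y : ℝ × ℝ × ℝ → ℝ × ℝ × ℝ} {p : ℝ × ℝ × ℝ}
    (hY : DifferentiableAt ℝ Y p) (u w s : ℝ × ℝ × ℝ) :
    fderiv ℝ (fun q => volumeForm (Y q) w s) p u
        + fderiv ℝ (fun q => volumeForm (Y q) s u) p w
        + fderiv ℝ (fun q => volumeForm (Y q) u w) p s
      = trace3 (fderiv ℝ Y p) * volumeForm u w s := by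
  simp only [fderiv_volumeForm_apply hY, cyclic_sum_volumeForm_map]

lemma fderiv_const_div_snd_fst_pow_apply (c : ℝ) (n : ℕ) {p : ℝ × ℝ × ℝ}
    (hp : p.2.1 ≠ 0) (u : ℝ × ℝ × ℝ) :
    fderiv ℝ (fun q : ℝ × ℝ × ℝ => c / q.2.1 ^ n) p u
      = -n * c * u.2.1 / p.2.1 ^ (n + 1) := by
  have hderiv : HasDerivAt (fun t : ℝ => c / t ^ n) (-n * c / p.2.1 ^ (n + 1)) p.2.1 := by
    refine ((hasDerivAt_const p.2.1 c).fun_div (hasDerivAt_pow n p.2.1)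
      (pow_ne_zero n hp)).congr_deriv ?_
    rcases n with _ | n
    · simp
    · field_simp; push_cast; ring
  have hfderiv := hderiv.comp_hasFDerivAt p (hasFDerivAt_snd (𝕜 := ℝ) (p := p)).fst
  rw [show (fun q : ℝ × ℝ × ℝ => c / q.2.1 ^ n) = (fun t => c / t ^ n) ∘ (fun q => q.2.1)
    from rfl, hfderiv.fderiv]
  simp only [smul_apply, ContinuousLinearMap.comp_apply,
    ContinuousLinearMap.coe_snd', ContinuousLinearMap.coe_fst', smul_eq_mul]
  ring

lemma trace3_fderiv_div_snd_fst_pow_three_smul_self (c : ℝ) {p : ℝ × ℝ × ℝ}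
    (hp : p.2.1 ≠ 0) :
    trace3 (fderiv ℝ (fun q : ℝ × ℝ × ℝ => (c / q.2.1 ^ 3) • q) p) = 0 := by
  have hcoeff : DifferentiableAt ℝ (fun q : ℝ × ℝ × ℝ => c / q.2.1 ^ 3) p := by
    fun_prop (disch := exact pow_ne_zero 3 hp)
  rw [trace3, fderiv_fun_smul hcoeff differentiableAt_fun_id, fderiv_fun_id]
  simp only [add_apply, smul_apply,
    ContinuousLinearMap.id_apply, ContinuousLinearMap.smulRight_apply,
    fderiv_const_div_snd_fst_pow_apply c 3 hp, Prod.fst_add, Prod.snd_add, Prod.smul_fst,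
    Prod.smul_snd, smul_eq_mul]
  field_simp
  ring

lemma fderiv_ZP_apply (p u : ℝ × ℝ × ℝ) :
    fderiv ℝ (fun q : ℝ × ℝ × ℝ =>
        (q.1 ^ 2, 2 * q.2.1 * q.1, 2 * (q.2.2 * q.1 + q.2.1 ^ 2))) p u
      = (2 * p.1 * u.1, 2 * (u.2.1 * p.1 + p.2.1 * u.1),
          2 * (u.2.2 * p.1 + p.2.2 * u.1 + 2 * p.2.1 * u.2.1)) := by
  simp (disch := fun_prop) [DifferentiableAt.fderiv_prodMk, fderiv_fun_mul, fderiv_fun_add,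
    fderiv_fun_pow, fderiv.fst, fderiv.snd]
  constructor <;> ring

/-- on `O₂ = {(x,v,a) : v ≠ 0}` with `ω = v⁻³ dv ∧ da` and
`Z_P = x² ∂ₓ + 2vx ∂ᵥ + 2(ax + v²) ∂ₐ`, the Lie derivative `L_{Z_P} ω` equals
`−(2/v³)(x dv∧da + v da∧dx + a dx∧dv)`, and this 2-form is closed.
The Lie derivative of a 2-form along `Z` is computed pointwise (on constant vectors) by
`(L_Z ω)(u,w) = D(ω(u,w))·Z + ω(DZ·u, w) + ω(u, DZ·w)`, and closedness of a 2-form `η`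
is the vanishing of the cyclic sum `Σ D(η(w,s))·u` over constant vectors. -/
theorem lie_derivative_presymplectic_form
    (ω η : ℝ × ℝ × ℝ → (ℝ × ℝ × ℝ) → (ℝ × ℝ × ℝ) → ℝ)
    (Z : ℝ × ℝ × ℝ → ℝ × ℝ × ℝ)
    (hω : ∀ p u w, ω p u w = (u.2.1 * w.2.2 - u.2.2 * w.2.1) / p.2.1 ^ 3)
    (hZ : ∀ p, Z p = (p.1 ^ 2, 2 * p.2.1 * p.1, 2 * (p.2.2 * p.1 + p.2.1 ^ 2)))
    (hη : ∀ p u w, η p u w = -(2 / p.2.1 ^ 3) *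
      (p.1 * (u.2.1 * w.2.2 - u.2.2 * w.2.1)
        + p.2.1 * (u.2.2 * w.1 - u.1 * w.2.2)
        + p.2.2 * (u.1 * w.2.1 - u.2.1 * w.1))) :
    (∀ p : ℝ × ℝ × ℝ, p.2.1 ≠ 0 → ∀ u w,
      fderiv ℝ (fun q => ω q u w) p (Z p) + ω p (fderiv ℝ Z p u) w
        + ω p u (fderiv ℝ Z p w) = η p u w) ∧
    (∀ p : ℝ × ℝ × ℝ, p.2.1 ≠ 0 → ∀ u w s,
      fderiv ℝ (fun q => η q w s) p u + fderiv ℝ (fun q => η q s u) p w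
        + fderiv ℝ (fun q => η q u w) p s = 0) := by
  have hZ_eq : Z = fun q => (q.1 ^ 2, 2 * q.2.1 * q.1, 2 * (q.2.2 * q.1 + q.2.1 ^ 2)) :=
    funext hZ
  have hη_eq : ∀ u w, (fun q => η q u w) = fun q => volumeForm ((-2 / q.2.1 ^ 3) • q) u w :=
    fun u w => funext fun q => by
      rw [hη]
      simp only [volumeForm, Prod.smul_fst, Prod.smul_snd, smul_eq_mul]
      ring
  refine ⟨fun p hp u w => ?_, fun p hp u w s => ?_⟩
  · simp only [hω, hZ_eq, fderiv_const_div_snd_fst_pow_apply _ 3 hp, fderiv_ZP_apply, hη]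
    field_simp
    ring
  · have hY : DifferentiableAt ℝ (fun q : ℝ × ℝ × ℝ => (-2 / q.2.1 ^ 3) • q) p := by
      fun_prop (disch := exact pow_ne_zero 3 hp)
    rw [hη_eq, hη_eq, hη_eq, cyclic_sum_fderiv_volumeForm hY,
      trace3_fderiv_div_snd_fst_pow_three_smul_self _ hp, zero_mul]
end
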